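/- arXiv:math/0511432 — 5 statements merged into one kernel-verified Lean document; each statement's English description precedes it below -/
import Mathlib

section
/- Let X be a set, R ⊆ F(X) a set of relators all of length 4, and G = ⟨X | R⟩. If a t₁⋯tₙ b is a chain word with inner link path s₁⋯sₙ, then the words a t₁⋯tₙ b and s₁⋯sₙ represent the same element of G. In particular, any word containing a chain word as a contiguous subword is equal in G to a word that is shorter by two letters, and hence is not geodesic. -/
/-- A *word* over `X` is a finite sequence of letters, where a letter is a generator
`x : X` together with a sign (`true` for `x`, `false` for `x⁻¹`). -/
abbrev Word (X : Type*) := List (X × Bool)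

/-- The formal inverse of a letter. -/
def letterInv {X : Type*} (l : X × Bool) : X × Bool := (l.1, !l.2)

/-- The element of the presented group `⟨X | R⟩` represented by a word. -/
def toG {X : Type*} (R : Set (FreeGroup X)) (w : Word X) : PresentedGroup R :=
  PresentedGroup.mk R (FreeGroup.mk w)

/-- A word is freely reduced if it has no two adjacent mutually inverse letters. -/
def FreelyReduced {X : Type*} (w : Word X) : Prop :=
  w.Chain' fun l₁ l₂ => l₂ ≠ letterInv l₁

/-- A nonempty word `p` is a piece w.r.t. `R` if two distinct relators of `R` both start
with `p` (as reduced words, i.e. products without cancellation). -/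
def IsPiece {X : Type*} [DecidableEq X] (R : Set (FreeGroup X)) (p : Word X) : Prop :=
  p ≠ [] ∧ ∃ r ∈ R, ∃ s ∈ R, r ≠ s ∧
    (∃ u, FreeGroup.toWord r = p ++ u) ∧ (∃ v, FreeGroup.toWord s = p ++ v)

/-- A (reduced) word is cyclically reduced if its last letter is not the inverse
of its first letter. -/
def CyclicallyReducedWord {X : Type*} (w : Word X) : Prop :=
  FreelyReduced w ∧ ¬ ∃ (a : X × Bool) (t : Word X), w = a :: (t ++ [letterInv a])

/-- `R` is symmetrized: every relator is cyclically reduced and `R` is closed under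
inversion and under cyclic permutation of reduced words. -/
def Symmetrized {X : Type*} [DecidableEq X] (R : Set (FreeGroup X)) : Prop :=
  (∀ r ∈ R, CyclicallyReducedWord (FreeGroup.toWord r)) ∧
  (∀ r ∈ R, r⁻¹ ∈ R) ∧
  (∀ r ∈ R, ∀ (a : X × Bool) (t : Word X),
      FreeGroup.toWord r = a :: t → FreeGroup.mk (t ++ [a]) ∈ R)

/-- The C''(4) condition: all relators have length four, and no relator is a product
(without cancellation) of fewer than four pieces. -/
def Cpp4 {X : Type*} [DecidableEq X] (R : Set (FreeGroup X)) : Prop :=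
  (∀ r ∈ R, (FreeGroup.toWord r).length = 4) ∧
  (∀ r ∈ R, ¬ ∃ ps : List (Word X), ps.length < 4 ∧ (∀ p ∈ ps, IsPiece R p) ∧
      FreeGroup.toWord r = ps.flatten)

/-- The product `r * s` is reduced without cancellation. -/
def NoCancel {X : Type*} [DecidableEq X] (r s : FreeGroup X) : Prop :=
  FreeGroup.toWord (r * s) = FreeGroup.toWord r ++ FreeGroup.toWord s

/-- The T(4) condition. -/
def T4 {X : Type*} [DecidableEq X] (R : Set (FreeGroup X)) : Prop :=
  ∀ r₁ ∈ R, ∀ r₂ ∈ R, ∀ r₃ ∈ R,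
    r₁ ≠ r₂⁻¹ → r₂ ≠ r₃⁻¹ → r₁ ≠ r₃⁻¹ →
    NoCancel r₁ r₂ ∨ NoCancel r₂ r₃ ∨ NoCancel r₃ r₁

/-- The word `a t₁⋯tₙ b` is a chain word with inner link path `s₁⋯sₙ` (n ≥ 1):
there are letters `u₀, …, uₙ` with `u₀ = a⁻¹`, `uₙ = b` and `tᵢ uᵢ sᵢ⁻¹ u_{i-1}⁻¹ ∈ R`
for all `i`. -/
def IsChainWord {X : Type*} (R : Set (FreeGroup X))
    (a : X × Bool) (t s : Word X) (b : X × Bool) : Prop :=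
  1 ≤ t.length ∧ ∃ hlen : t.length = s.length, ∃ u : ℕ → X × Bool,
    u 0 = letterInv a ∧ u t.length = b ∧
    ∀ i, ∀ hi : i < t.length,
      FreeGroup.mk [t[i], u (i + 1), letterInv (s[i]'(hlen ▸ hi)), letterInv (u i)] ∈ R

/-- A word is geodesic if no strictly shorter word represents the same element of the
presented group. -/
def Geodesic {X : Type*} (R : Set (FreeGroup X)) (w : Word X) : Prop :=
  ∀ v : Word X, toG R v = toG R w → w.length ≤ v.length

/-- A word is cyclically geodesic if all of its cyclic permutations are geodesic. -/
def CyclicallyGeodesic {X : Type*} (R : Set (FreeGroup X)) (w : Word X) : Prop :=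
  ∀ n : ℕ, Geodesic R (w.rotate n)

/-- A pair is a two-letter contiguous subword of (the reduced word of) a relator of `R`. -/
def IsPair {X : Type*} [DecidableEq X] (R : Set (FreeGroup X)) (l₁ l₂ : X × Bool) : Prop :=
  ∃ r ∈ R, [l₁, l₂] <:+: FreeGroup.toWord r

/-- `P` holds for all cyclically-consecutive entries of `w`. -/
def CyclicAdj {X : Type*} (P : (X × Bool) → (X × Bool) → Prop) (w : Word X) : Prop :=
  ∀ i, ∀ hi : i < w.length,
    P (w[i]) (w[(i + 1) % w.length]'(Nat.mod_lt _ (by omega)))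

/-- The presentation has parity with respect to `par : X → Bool` (`true` = white,
`false` = black) if in every relator, read cyclically, consecutive letters have
opposite parities. -/
def HasParity {X : Type*} [DecidableEq X] (R : Set (FreeGroup X)) (par : X → Bool) : Prop :=
  ∀ r ∈ R, CyclicAdj (fun l₁ l₂ => par l₁.1 ≠ par l₂.1) (FreeGroup.toWord r)

/-- The presentation is alternating: in every relator, read cyclically, letters of
exponent `+1` and exponent `-1` alternate. -/
def AlternatingPresentation {X : Type*} [DecidableEq X] (R : Set (FreeGroup X)) : Prop :=
  ∀ r ∈ R, CyclicAdj (fun l₁ l₂ => l₁.2 ≠ l₂.2) (FreeGroup.toWord r)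

/-- A word alternates in sign if adjacent letters have opposite exponents. -/
def AlternatesInSign {X : Type*} (w : Word X) : Prop :=
  w.Chain' fun l₁ l₂ => l₁.2 ≠ l₂.2

/-- A pair exchange: if `x₁x₂x₃x₄ ∈ R`, replace an occurrence of the contiguous subword
`x₁x₂` by `x₄⁻¹x₃⁻¹`. -/
def PairExchange {X : Type*} (R : Set (FreeGroup X)) (v w : Word X) : Prop :=
  ∃ (p q : Word X) (x₁ x₂ x₃ x₄ : X × Bool),
    FreeGroup.mk [x₁, x₂, x₃, x₄] ∈ R ∧
    v = p ++ [x₁, x₂] ++ q ∧ w = p ++ [letterInv x₄, letterInv x₃] ++ q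

/-- A free reduction deletes an adjacent mutually inverse pair of letters. -/
def FreeReductionStep {X : Type*} (v w : Word X) : Prop :=
  ∃ (p q : Word X) (l : X × Bool), v = p ++ [l, letterInv l] ++ q ∧ w = p ++ q

/-- A chain collapse replaces a contiguous chain word subword by its inner link path. -/
def ChainCollapseStep {X : Type*} (R : Set (FreeGroup X)) (v w : Word X) : Prop :=
  ∃ (p q : Word X) (a b : X × Bool) (t s : Word X),
    IsChainWord R a t s b ∧ v = p ++ (a :: (t ++ [b])) ++ q ∧ w = p ++ s ++ q

/-- A chain flip replaces one side of a conjugacy chain by the other: it replaces the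
whole word `s₁⋯sₙ` by `t₁⋯tₙ` (or vice versa) where, for some letter `a`, the word
`a t₁⋯tₙ a⁻¹` is a chain word with inner link path `s₁⋯sₙ`. -/
def ChainFlip {X : Type*} (R : Set (FreeGroup X)) (v w : Word X) : Prop :=
  ∃ a : X × Bool, IsChainWord R a w v (letterInv a) ∨ IsChainWord R a v w (letterInv a)

lemma toG_append {X : Type*} (R : Set (FreeGroup X)) (v w : Word X) :
    toG R (v ++ w) = toG R v * toG R w := by
  simp [toG, ← FreeGroup.mul_mk]

lemma rel_one {X : Type*} {R : Set (FreeGroup X)} {r : FreeGroup X} (hr : r ∈ R) :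
    PresentedGroup.mk R r = 1 :=
  (QuotientGroup.eq_one_iff _).2 (Subgroup.subset_normalClosure hr)

lemma toG_letterInv {X : Type*} (R : Set (FreeGroup X)) (l : X × Bool) :
    toG R [letterInv l] = (toG R [l])⁻¹ := by
  apply eq_inv_of_mul_eq_one_left
  have h : FreeGroup.mk [letterInv l] * FreeGroup.mk [l] = 1 := by
    rw [FreeGroup.mul_mk]
    cases l with
    | mk x b =>
      have h : FreeGroup.mk ([] ++ (x, !b) :: (x, !!b) :: []) = FreeGroup.mk ([] ++ ([] : Word X)) :=
        Quot.sound FreeGroup.Red.Step.not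
      simpa [letterInv, FreeGroup.one_eq_mk] using h
  show toG R [letterInv l] * toG R [l] = 1
  simp [toG, ← map_mul, h]

/-- A chain word equals its inner link path in `G`; in particular any word containing a
chain word as a contiguous subword equals in `G` a word shorter by two letters, and hence
is not geodesic. -/
theorem chainWord_eq_innerLinkPath
    {X : Type*} [DecidableEq X] (R : Set (FreeGroup X))
    (hlen4 : ∀ r ∈ R, (FreeGroup.toWord r).length = 4)
    (a b : X × Bool) (t s : Word X) (h : IsChainWord R a t s b) :
    toG R (a :: (t ++ [b])) = toG R s ∧
      ∀ p q : Word X,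
        toG R (p ++ (a :: (t ++ [b])) ++ q) = toG R (p ++ s ++ q) ∧
        (p ++ s ++ q).length + 2 = (p ++ (a :: (t ++ [b])) ++ q).length ∧
        ¬ Geodesic R (p ++ (a :: (t ++ [b])) ++ q) := by
  obtain ⟨ht1, hlen, u, hu0, hun, hrel⟩ := h
  -- key induction
  have key : ∀ k, k ≤ t.length →
      toG R (a :: t.take k) = toG R (s.take k) * (toG R [u k])⁻¹ := by
    intro k hk
    induction k with
    | zero =>
      simp only [List.take_zero]
      have : toG R [u 0] = (toG R [a])⁻¹ := by rw [hu0, toG_letterInv]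
      rw [this, inv_inv]
      have hnil : toG R ([] : Word X) = 1 := by simp [toG, FreeGroup.one_eq_mk.symm]
      rw [hnil, one_mul]
    | succ k ih =>
      have hk' : k < t.length := hk
      have ihk := ih (le_of_lt hk')
      have hks : k < s.length := hlen ▸ hk'
      have htake : t.take (k+1) = t.take k ++ [t[k]] := by
        rw [List.take_succ]; simp [List.getElem?_eq_getElem hk']
      have hstake : s.take (k+1) = s.take k ++ [s[k]] := by
        rw [List.take_succ]; simp [List.getElem?_eq_getElem hks]
      have hrk := rel_one (hrel k hk')
      have hrel' : toG R [t[k]] * toG R [u (k+1)] * (toG R [s[k]])⁻¹ * (toG R [u k])⁻¹ = 1 := by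
        have : toG R ([t[k]] ++ [u (k+1)] ++ [letterInv (s[k])] ++ [letterInv (u k)]) = 1 := by
          simpa [toG] using hrk
        rw [toG_append, toG_append, toG_append, toG_letterInv, toG_letterInv] at this
        exact this
      have h2 : toG R [t[k]] * toG R [u (k+1)] = toG R [u k] * toG R [s[k]] := by
        have e1 : toG R [t[k]] * toG R [u (k+1)] * (toG R [s[k]])⁻¹ = toG R [u k] :=
          mul_inv_eq_one.mp hrel'
        calc toG R [t[k]] * toG R [u (k+1)]
            = toG R [t[k]] * toG R [u (k+1)] * (toG R [s[k]])⁻¹ * toG R [s[k]] := by group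
          _ = toG R [u k] * toG R [s[k]] := by rw [e1]
      have step : (toG R [u k])⁻¹ * toG R [t[k]] = toG R [s[k]] * (toG R [u (k+1)])⁻¹ := by
        calc (toG R [u k])⁻¹ * toG R [t[k]]
            = (toG R [u k])⁻¹ * (toG R [t[k]] * toG R [u (k+1)]) * (toG R [u (k+1)])⁻¹ := by group
          _ = (toG R [u k])⁻¹ * (toG R [u k] * toG R [s[k]]) * (toG R [u (k+1)])⁻¹ := by rw [h2]
          _ = toG R [s[k]] * (toG R [u (k+1)])⁻¹ := by group
      calc toG R (a :: t.take (k+1))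
          = toG R ((a :: t.take k) ++ [t[k]]) := by rw [htake]; simp
        _ = toG R (a :: t.take k) * toG R [t[k]] := toG_append ..
        _ = toG R (s.take k) * ((toG R [u k])⁻¹ * toG R [t[k]]) := by rw [ihk]; group
        _ = toG R (s.take k) * (toG R [s[k]] * (toG R [u (k+1)])⁻¹) := by rw [step]
        _ = toG R (s.take (k+1)) * (toG R [u (k+1)])⁻¹ := by
            rw [hstake, toG_append]; group
  have main : toG R (a :: (t ++ [b])) = toG R s := by
    have h1 := key t.length le_rfl
    rw [List.take_length, hun, show s.take t.length = s from by rw [hlen, List.take_length]] at h1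
    have : toG R (a :: (t ++ [b])) = toG R (a :: t) * toG R [b] := by
      have : a :: (t ++ [b]) = (a :: t) ++ [b] := by simp
      rw [this, toG_append]
    rw [this, h1]; group
  refine ⟨main, fun p q => ?_⟩
  have heq : toG R (p ++ (a :: (t ++ [b])) ++ q) = toG R (p ++ s ++ q) := by
    rw [toG_append, toG_append, toG_append, toG_append, main]
  have hlen2 : (p ++ s ++ q).length + 2 = (p ++ (a :: (t ++ [b])) ++ q).length := by
    simp [← hlen]; omega
  exact ⟨heq, hlen2, fun hg => by
    have := hg (p ++ s ++ q) heq.symm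
    omega⟩
end

section
/- Let X be a set, R ⊆ F(X) a set of relators all of length 4, and G = ⟨X | R⟩. If for some letter a the word a t₁⋯tₙ a⁻¹ is a chain word (a conjugacy chain) with inner link path s₁⋯sₙ, then the elements of G represented by t₁⋯tₙ and by s₁⋯sₙ are conjugate in G. -/
lemma mk_rel_eq_one {X : Type*} (R : Set (FreeGroup X)) {r : FreeGroup X} (hr : r ∈ R) :
    PresentedGroup.mk R r = 1 :=
  (QuotientGroup.eq_one_iff r).mpr (Subgroup.subset_normalClosure hr)

/-- If `a t₁⋯tₙ a⁻¹` is a conjugacy chain word with inner link path `s₁⋯sₙ`, then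
`t₁⋯tₙ` and `s₁⋯sₙ` represent conjugate elements of the presented group. -/
theorem conjugacyChain_isConj
    {X : Type*} [DecidableEq X] (R : Set (FreeGroup X))
    (hlen4 : ∀ r ∈ R, (FreeGroup.toWord r).length = 4)
    (a : X × Bool) (t s : Word X) (h : IsChainWord R a t s (letterInv a)) :
    IsConj (toG R t) (toG R s) := by

  obtain ⟨hn, hlen, u, hu0, hun, hrel⟩ := h
  set g : (X × Bool) → PresentedGroup R := fun l => toG R [l] with hg
  have key : ∀ m, m ≤ t.length →
      toG R (t.take m) = g (u 0) * toG R (s.take m) * (g (u m))⁻¹ := by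
    intro m hm
    induction m with
    | zero =>
        simp only [List.take_zero, toG]
        rw [show FreeGroup.mk ([] : Word X) = 1 from rfl, map_one]
        group
    | succ m ih =>
      have hm' : m < t.length := hm
      have hms : m < s.length := hlen ▸ hm'
      have ht : t.take (m + 1) = t.take m ++ [t[m]] := by
        rw [List.take_succ, List.getElem?_eq_getElem hm']; rfl
      have hs : s.take (m + 1) = s.take m ++ [s[m]] := by
        rw [List.take_succ, List.getElem?_eq_getElem hms]; rfl
      have hone := mk_rel_eq_one R (hrel m hm')
      have h4 : g t[m] * g (u (m + 1)) * (g s[m])⁻¹ * (g (u m))⁻¹ = 1 := by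
        rw [hg]
        simp only [← toG_letterInv]
        have : ([t[m], u (m + 1), letterInv (s[m]'hms), letterInv (u m)] : Word X)
            = [t[m]] ++ [u (m + 1)] ++ [letterInv (s[m]'hms)] ++ [letterInv (u m)] := rfl
        calc toG R [t[m]] * toG R [u (m + 1)] * toG R [letterInv (s[m]'hms)]
              * toG R [letterInv (u m)]
            = toG R ([t[m], u (m + 1), letterInv (s[m]'hms), letterInv (u m)]) := by
              rw [this, toG_append, toG_append, toG_append]
          _ = 1 := hone
      have htm : g t[m] = g (u m) * g s[m] * (g (u (m + 1)))⁻¹ := by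
        have h4' : g t[m] * (g (u (m + 1)) * (g s[m])⁻¹ * (g (u m))⁻¹) = 1 := by
          rw [← h4]; group
        rw [mul_eq_one_iff_eq_inv] at h4'
        rw [h4']
        group
      rw [ht, hs, toG_append, toG_append, ih (le_of_lt hm')]
      show _ * g t[m] = _ * (_ * g s[m]) * _
      rw [htm]
      group
  have final := key t.length le_rfl
  have hts : s.take t.length = s := by rw [hlen, List.take_length]
  rw [List.take_length, hts, hu0, hun] at final
  rw [isConj_iff]
  refine ⟨(g (letterInv a))⁻¹, ?_⟩
  rw [final]
  group
end

section
/- Let X be a set and let R ⊆ F(X) be a symmetrized set of relators, all of length 4, satisfying T(4). If a, b, c are letters such that ab and b⁻¹c are both pairs (two-letter contiguous subwords of relators in R), and c ≠ a⁻¹, then ac is not a pair. In other words, in a T(4) presentation no pair is a sister-set. -/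
/-!
The pairs `ab`, `b⁻¹c` and `ac` give, after cyclic permutation (and inversion for `ac`),
relators `r₁ = b⋯a`, `r₂ = a⁻¹⋯c⁻¹` and `r₃ = c⋯b⁻¹`. Comparing first and last letters, the
reducedness of the pairs and `c ≠ a⁻¹` show that no two of them are mutually inverse, while each
of the products `r₁r₂`, `r₂r₃`, `r₃r₁` cancels at the junction, contradicting T(4).
-/

open FreeGroup

section

variable {X : Type*}

@[simp]
lemma letterInv_letterInv (l : X × Bool) : letterInv (letterInv l) = l := by
  simp [letterInv]

lemma letterInv_involutive : Function.Involutive (letterInv (X := X)) := letterInv_letterInv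

lemma ne_letterInv_iff {l₁ l₂ : X × Bool} :
    l₂ ≠ letterInv l₁ ↔ (l₁.1 = l₂.1 → l₁.2 = l₂.2) := by
  obtain ⟨x₁, b₁⟩ := l₁
  obtain ⟨x₂, b₂⟩ := l₂
  cases b₁ <;> cases b₂ <;> simp [letterInv, eq_comm]

lemma freelyReduced_iff_isReduced {w : Word X} : FreelyReduced w ↔ FreeGroup.IsReduced w := by
  simp only [FreelyReduced, FreeGroup.IsReduced, ← ne_letterInv_iff]
  rfl

lemma isReduced_pair_iff {l₁ l₂ : X × Bool} :
    FreeGroup.IsReduced [l₁, l₂] ↔ l₂ ≠ letterInv l₁ := by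
  simp [FreeGroup.isReduced_cons_cons, FreeGroup.IsReduced.singleton, ne_letterInv_iff]

lemma invRev_eq_reverse_map_letterInv (w : Word X) : invRev w = (w.map letterInv).reverse := rfl

lemma CyclicallyReducedWord.freelyReduced_concat {a : X × Bool} {t : Word X}
    (h : CyclicallyReducedWord (a :: t)) : FreelyReduced (t ++ [a]) := by
  refine List.isChain_append.2 ⟨h.1.tail, List.isChain_singleton a, ?_⟩
  intro x hx y hy hyx
  obtain ⟨t', rfl⟩ := List.getLast?_eq_some_iff.1 hx
  obtain rfl : y = a := by simpa using hy.symm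
  exact h.2 ⟨y, t', by rw [hyx, letterInv_letterInv]⟩

section

variable [DecidableEq X]

lemma toWord_mk_of_freelyReduced {w : Word X} (h : FreelyReduced w) : (mk w).toWord = w := by
  rw [toWord_mk, (freelyReduced_iff_isReduced.1 h).reduce_eq]

lemma toWord_inv_cons_concat {r : FreeGroup X} {x y : X × Bool} {u : Word X}
    (h : r.toWord = x :: (u ++ [y])) :
    r⁻¹.toWord = letterInv y :: (invRev u ++ [letterInv x]) := by
  simp [toWord_inv, h, invRev_eq_reverse_map_letterInv]

lemma letterInv_eq_of_eq_inv {r s : FreeGroup X} {x y x' y' : X × Bool} {u v : Word X}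
    (hr : r.toWord = x :: (u ++ [y])) (hs : s.toWord = x' :: (v ++ [y'])) (h : r = s⁻¹) :
    letterInv x = y' ∧ letterInv y = x' := by
  rw [h, toWord_inv_cons_concat hs, List.cons.injEq] at hr
  obtain ⟨hx, hu⟩ := hr
  have hy : letterInv x' = y := by simpa using congrArg List.getLast? hu
  exact ⟨by rw [← hx, letterInv_letterInv], by rw [← hy, letterInv_letterInv]⟩

lemma not_noCancel {r s : FreeGroup X} {x y y' : X × Bool} {u v : Word X}
    (hr : r.toWord = x :: (u ++ [y])) (hs : s.toWord = y' :: v) (hy : y' = letterInv y) :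
    ¬ NoCancel r s := by
  intro h
  have hred : FreeGroup.IsReduced (x :: (u ++ [y]) ++ y' :: v) := by
    rw [← hr, ← hs, ← h]
    exact isReduced_toWord
  exact isReduced_pair_iff.1 (hred.infix ⟨x :: u, v, by simp⟩) hy

lemma IsPair.ne_letterInv {R : Set (FreeGroup X)} {l₁ l₂ : X × Bool} (h : IsPair R l₁ l₂) :
    l₂ ≠ letterInv l₁ := by
  obtain ⟨r, -, hinf⟩ := h
  exact isReduced_pair_iff.1 (isReduced_toWord.infix hinf)

variable {R : Set (FreeGroup X)}

lemma IsPair.inv (hsym : Symmetrized R) {l₁ l₂ : X × Bool} (h : IsPair R l₁ l₂) :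
    IsPair R (letterInv l₂) (letterInv l₁) := by
  obtain ⟨r, hr, hinf⟩ := h
  refine ⟨r⁻¹, hsym.2.1 r hr, ?_⟩
  rw [toWord_inv, invRev_eq_reverse_map_letterInv]
  exact (hinf.map letterInv).reverse

lemma Symmetrized.toWord_mk_concat (hsym : Symmetrized R) {r : FreeGroup X} (hr : r ∈ R)
    {a : X × Bool} {t : Word X} (h : r.toWord = a :: t) : (mk (t ++ [a])).toWord = t ++ [a] :=
  toWord_mk_of_freelyReduced (h ▸ hsym.1 r hr).freelyReduced_concat

lemma Symmetrized.exists_toWord_eq_append_of_toWord_eq_append (hsym : Symmetrized R)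
    {u v : Word X} {r : FreeGroup X} (hr : r ∈ R) (h : r.toWord = u ++ v) :
    ∃ r' ∈ R, r'.toWord = v ++ u := by
  induction u generalizing r v with
  | nil => exact ⟨r, hr, by simpa using h⟩
  | cons a u ih =>
    obtain ⟨r', hr', h'⟩ := ih (v := v ++ [a]) (hsym.2.2 r hr a (u ++ v) h)
      (by rw [hsym.toWord_mk_concat (t := u ++ v) hr h, List.append_assoc])
    exact ⟨r', hr', by simpa using h'⟩

lemma Symmetrized.exists_toWord_eq_of_isPair (hsym : Symmetrized R) {l₁ l₂ : X × Bool}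
    (h : IsPair R l₁ l₂) : ∃ r ∈ R, ∃ u, r.toWord = l₂ :: (u ++ [l₁]) := by
  obtain ⟨r, hr, s, t, hst⟩ := h
  obtain ⟨r', hr', h'⟩ := hsym.exists_toWord_eq_append_of_toWord_eq_append (u := s ++ [l₁])
    (v := l₂ :: t) hr (by simp [← hst])
  exact ⟨r', hr', t ++ s, by simp [h']⟩

end

end

theorem no_pair_is_sisterSet_general
    {X : Type*} [DecidableEq X] (R : Set (FreeGroup X))
    (hsym : Symmetrized R)
    (hT : T4 R) (a b c : X × Bool)
    (hab : IsPair R a b) (hbc : IsPair R (letterInv b) c) (hca : c ≠ letterInv a) :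
    ¬ IsPair R a c := by
  intro hac
  obtain ⟨r₁, hr₁, u₁, hw₁⟩ := hsym.exists_toWord_eq_of_isPair hab
  obtain ⟨r₂, hr₂, u₂, hw₂⟩ := hsym.exists_toWord_eq_of_isPair (hac.inv hsym)
  obtain ⟨r₃, hr₃, u₃, hw₃⟩ := hsym.exists_toWord_eq_of_isPair hbc
  have h₁₂ : r₁ ≠ r₂⁻¹ := fun h => hbc.ne_letterInv <| by
    rw [letterInv_letterInv]
    exact letterInv_involutive.injective (letterInv_eq_of_eq_inv hw₁ hw₂ h).1.symm
  have h₂₃ : r₂ ≠ r₃⁻¹ := fun h =>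
    hab.ne_letterInv (letterInv_involutive.injective (letterInv_eq_of_eq_inv hw₂ hw₃ h).1).symm
  have h₁₃ : r₁ ≠ r₃⁻¹ := fun h => hca (letterInv_eq_of_eq_inv hw₁ hw₃ h).2.symm
  rcases hT r₁ hr₁ r₂ hr₂ r₃ hr₃ h₁₂ h₂₃ h₁₃ with h | h | h
  · exact not_noCancel hw₁ hw₂ rfl h
  · exact not_noCancel hw₂ hw₃ (letterInv_letterInv c).symm h
  · exact not_noCancel hw₃ hw₁ (letterInv_letterInv b).symm h

/-- In a symmetrized T(4) presentation with all relators of length 4, no pair is a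
sister-set: if `ab` and `b⁻¹c` are pairs and `c ≠ a⁻¹`, then `ac` is not a pair. -/
theorem no_pair_is_sisterSet
    {X : Type*} [DecidableEq X] (R : Set (FreeGroup X))
    (hsym : Symmetrized R) (hlen4 : ∀ r ∈ R, (FreeGroup.toWord r).length = 4)
    (hT : T4 R) (a b c : X × Bool)
    (hab : IsPair R a b) (hbc : IsPair R (letterInv b) c) (hca : c ≠ letterInv a) :
    ¬ IsPair R a c :=
  no_pair_is_sisterSet_general R hsym hT a b c hab hbc hca
end

section
/- Let X be a set and let R ⊆ F(X) be a symmetrized set of relators satisfying C''(4), and suppose in addition that every single letter occurring in some relator of R is a piece. Then every piece has length exactly 1; equivalently, if ab·u ∈ R and ab·v ∈ R for letters a, b and words u, v (all products without cancellation), then u = v. Thus a pair determines the relator containing it uniquely up to cyclic permutation. -/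
/-- In a symmetrized C''(4) presentation in which every letter occurring in a relator is
a piece, every piece has length exactly one; equivalently, two relators starting with the
same two letters coincide, so a pair determines its relator uniquely up to cyclic
permutation. -/
theorem piece_length_one_and_pair_determines_relator
    {X : Type*} [DecidableEq X] (R : Set (FreeGroup X))
    (hsym : Symmetrized R) (hC : Cpp4 R)
    (hletters : ∀ r ∈ R, ∀ l ∈ FreeGroup.toWord r, IsPiece R [l]) :
    (∀ p : Word X, IsPiece R p → p.length = 1) ∧
      ∀ (a b : X × Bool) (u v : Word X) (r s : FreeGroup X), r ∈ R → s ∈ R →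
        FreeGroup.toWord r = [a, b] ++ u → FreeGroup.toWord s = [a, b] ++ v → u = v := by
  have key : ∀ p : Word X, IsPiece R p → p.length = 1 := by
    intro p hp
    by_contra hlen
    obtain ⟨hne, r, hr, s, hs, hrs, ⟨u, hu⟩, hsp⟩ := hp
    have h4 := hC.1 r hr
    have hplen : 2 ≤ p.length := by
      have : p.length ≠ 0 := by simpa [List.length_eq_zero_iff] using hne
      omega
    have hsum : p.length + u.length = 4 := by
      have := congrArg List.length hu
      simp at this; omega
    apply hC.2 r hr
    refine ⟨p :: u.map (fun l => [l]), ?_, ?_, ?_⟩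
    · simp; omega
    · intro q hq
      rcases List.mem_cons.mp hq with hq | hq
      · exact hq ▸ ⟨hne, r, hr, s, hs, hrs, ⟨u, hu⟩, hsp⟩
      · obtain ⟨l, hl, rfl⟩ := List.mem_map.mp hq
        exact hletters r hr l (by rw [hu]; exact List.mem_append_right _ hl)
    · have hfl : ∀ w : Word X, (w.map (fun l => [l])).flatten = w := by
        intro w; induction w <;> simp_all
      rw [hu]; simp [hfl]
  refine ⟨key, ?_⟩
  intro a b u v r s hr hs hru hsv
  by_cases hrs : r = s
  · subst hrs
    rw [hru] at hsv
    simpa using hsv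
  · exfalso
    have : ([a, b] : Word X).length = 1 :=
      key [a, b] ⟨by simp, r, hr, s, hs, hrs, ⟨u, hru⟩, ⟨v, hsv⟩⟩
    simp at this
end

section
/- Let X and Y be disjoint sets, and let R₁ ⊆ F(X) and R₂ ⊆ F(Y) be symmetrized sets of relators each satisfying C''(4) and T(4). Then the union of the images of R₁ and R₂ in F(X ⊔ Y) under the canonical embeddings F(X) → F(X ⊔ Y) and F(Y) → F(X ⊔ Y) is a symmetrized set of relators satisfying C''(4) and T(4). (Hence the free product of two C''(4)–T(4) groups is again presented by a C''(4)–T(4) presentation.) -/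
/-! Mapping along an injective map of alphabets sends reduced words to reduced words letter by
letter, so the image of each `Rᵢ` in `F(X ⊔ Y)` inherits all three conditions. The two images
are written over disjoint alphabets: a piece of the union is a piece of one of them, and a
product of relators from different images never cancels, so in a triple of relators that do not
all come from one image some cyclically consecutive pair multiplies without cancellation. -/

open Function

namespace FreeGroup

variable {α β : Type*} {f : α → β}

theorem IsReduced.map_of_injective (hf : Injective f) {L : List (α × Bool)}
    (h : IsReduced L) : IsReduced (L.map (Prod.map f id)) :=
  (List.isChain_map _).2 (h.imp fun _ _ hab heq => hab (hf heq))

variable [DecidableEq α] [DecidableEq β]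

theorem toWord_map_of_injective (hf : Injective f) (x : FreeGroup α) :
    (map f x).toWord = x.toWord.map (Prod.map f id) := by
  conv_lhs => rw [← x.mk_toWord, map.mk, toWord_mk]
  exact (isReduced_toWord.map_of_injective hf).reduce_eq

theorem toWord_map_sublist (f : α → β) (x : FreeGroup α) :
    (map f x).toWord.Sublist (x.toWord.map (Prod.map f id)) := by
  conv_lhs => rw [← x.mk_toWord, map.mk, toWord_mk]
  exact reduce.red.sublist

theorem toWord_mul_of_forall_ne {x y : FreeGroup α}
    (h : ∀ a ∈ x.toWord, ∀ b ∈ y.toWord, a.1 ≠ b.1) :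
    (x * y).toWord = x.toWord ++ y.toWord := by
  rw [toWord_mul]
  refine IsReduced.reduce_eq (List.IsChain.append isReduced_toWord isReduced_toWord ?_)
  exact fun a ha b hb hab =>
    absurd hab (h a (List.mem_of_mem_getLast? ha) b (List.mem_of_mem_head? hb))

end FreeGroup

section Relators

variable {X Z : Type*} {f : X → Z}

theorem FreelyReduced.map_of_injective (hf : Injective f) {w : Word X}
    (h : FreelyReduced w) : FreelyReduced (w.map (Prod.map f id)) :=
  (List.isChain_map _).2 (h.imp fun _ _ hne heq => hne ((hf.prodMap injective_id) heq))

theorem CyclicallyReducedWord.map_of_injective (hf : Injective f) {w : Word X}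
    (h : CyclicallyReducedWord w) : CyclicallyReducedWord (w.map (Prod.map f id)) := by
  refine ⟨h.1.map_of_injective hf, ?_⟩
  rintro ⟨_, _, hw⟩
  obtain ⟨a, _, rfl, rfl, ht⟩ := List.map_eq_cons_iff.1 hw
  obtain ⟨t, _, rfl, rfl, hb⟩ := List.map_eq_append_iff.1 ht
  obtain ⟨b, rfl, hab⟩ := List.map_eq_singleton_iff.1 hb
  obtain rfl : b = letterInv a :=
    hf.prodMap injective_id (hab : Prod.map f id b = Prod.map f id (letterInv a))
  exact h.2 ⟨a, t, rfl⟩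

variable [DecidableEq X] [DecidableEq Z]

def generatorsOf (R : Set (FreeGroup X)) : Set X :=
  {x | ∃ r ∈ R, ∃ b, (x, b) ∈ r.toWord}

theorem generatorsOf_image_map_subset (f : X → Z) (R : Set (FreeGroup X)) :
    generatorsOf (FreeGroup.map f '' R) ⊆ Set.range f := by
  rintro _ ⟨_, ⟨a, -, rfl⟩, b, hl⟩
  obtain ⟨l, -, hl⟩ := List.mem_map.1 ((FreeGroup.toWord_map_sublist f a).subset hl)
  exact ⟨l.1, congrArg Prod.fst hl⟩

theorem Symmetrized.image_map (hf : Injective f) {R : Set (FreeGroup X)}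
    (h : Symmetrized R) : Symmetrized (FreeGroup.map f '' R) := by
  refine ⟨?_, ?_, ?_⟩
  · rintro _ ⟨a, ha, rfl⟩
    rw [FreeGroup.toWord_map_of_injective hf]
    exact (h.1 a ha).map_of_injective hf
  · rintro _ ⟨a, ha, rfl⟩
    exact ⟨a⁻¹, h.2.1 a ha, map_inv _ _⟩
  · rintro _ ⟨a, ha, rfl⟩ _ _ hw
    rw [FreeGroup.toWord_map_of_injective hf] at hw
    obtain ⟨b, t, hbt, rfl, rfl⟩ := List.map_eq_cons_iff.1 hw
    exact ⟨_, h.2.2 a ha b t hbt, by rw [FreeGroup.map.mk, List.map_append]; rfl⟩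

theorem Symmetrized.union {R S : Set (FreeGroup X)} (hR : Symmetrized R)
    (hS : Symmetrized S) : Symmetrized (R ∪ S) := by
  refine ⟨?_, ?_, ?_⟩
  · rintro r (hr | hr)
    exacts [hR.1 r hr, hS.1 r hr]
  · rintro r (hr | hr)
    exacts [Or.inl (hR.2.1 r hr), Or.inr (hS.2.1 r hr)]
  · rintro r (hr | hr) a t hrt
    exacts [Or.inl (hR.2.2 r hr a t hrt), Or.inr (hS.2.2 r hr a t hrt)]

theorem IsPiece.of_image_map (hf : Injective f) {R : Set (FreeGroup X)} {p : Word X}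
    (hp : IsPiece (FreeGroup.map f '' R) (p.map (Prod.map f id))) : IsPiece R p := by
  have hF : Injective (List.map (Prod.map f (id : Bool → Bool))) :=
    List.map_injective_iff.2 (hf.prodMap injective_id)
  have prefix_of : ∀ a : FreeGroup X, ∀ u,
      (FreeGroup.map f a).toWord = p.map (Prod.map f id) ++ u → ∃ u', a.toWord = p ++ u' := by
    intro a u hu
    rw [FreeGroup.toWord_map_of_injective hf] at hu
    obtain ⟨p', u', hpu, hp', -⟩ := List.map_eq_append_iff.1 hu
    exact ⟨u', hF hp' ▸ hpu⟩
  obtain ⟨hne, _, ⟨a, ha, rfl⟩, _, ⟨b, hb, rfl⟩, hab, ⟨u, hu⟩, ⟨v, hv⟩⟩ := hp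
  exact ⟨by rintro rfl; exact hne rfl, a, ha, b, hb, fun h => hab (h ▸ rfl),
    prefix_of a u hu, prefix_of b v hv⟩

theorem Cpp4.image_map (hf : Injective f) {R : Set (FreeGroup X)} (h : Cpp4 R) :
    Cpp4 (FreeGroup.map f '' R) := by
  refine ⟨?_, ?_⟩
  · rintro _ ⟨a, ha, rfl⟩
    rw [FreeGroup.toWord_map_of_injective hf, List.length_map]
    exact h.1 a ha
  · rintro _ ⟨a, ha, rfl⟩ ⟨ps, hlen, hps, hflat⟩
    rw [FreeGroup.toWord_map_of_injective hf] at hflat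
    have hrange : ps ∈ Set.range (List.map (List.map (Prod.map f id))) := by
      rw [Set.range_list_map]
      intro p hp
      rw [Set.range_list_map]
      intro l hl
      obtain ⟨m, -, rfl⟩ := List.mem_map.1 (hflat ▸ List.mem_flatten.2 ⟨p, hp, hl⟩)
      exact ⟨m, rfl⟩
    obtain ⟨qs, rfl⟩ := hrange
    rw [← List.map_flatten] at hflat
    refine h.2 a ha ⟨qs, by simpa using hlen, fun q hq => ?_,
      List.map_injective_iff.2 (hf.prodMap injective_id) hflat⟩
    exact (hps _ (List.mem_map_of_mem hq)).of_image_map hf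

theorem IsPiece.of_union {R S : Set (FreeGroup X)}
    (hRS : Disjoint (generatorsOf R) (generatorsOf S)) {p : Word X} (hp : IsPiece (R ∪ S) p)
    {r : FreeGroup X} (hr : r ∈ R) (hpr : ∀ l ∈ p, l ∈ r.toWord) : IsPiece R p := by
  obtain ⟨hne, r₁, hr₁, r₂, hr₂, hne₁₂, ⟨u, hu⟩, ⟨v, hv⟩⟩ := hp
  obtain ⟨l, p', rfl⟩ := List.exists_cons_of_ne_nil hne
  have hlR : l.1 ∈ generatorsOf R := ⟨r, hr, l.2, hpr l List.mem_cons_self⟩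
  have mem_R : ∀ s ∈ R ∪ S, l ∈ s.toWord → s ∈ R := fun s hs hl =>
    hs.resolve_right fun hs => Set.disjoint_left.1 hRS hlR ⟨s, hs, l.2, hl⟩
  exact ⟨hne, r₁, mem_R r₁ hr₁ (by simp [hu]), r₂, mem_R r₂ hr₂ (by simp [hv]), hne₁₂,
    ⟨u, hu⟩, ⟨v, hv⟩⟩

theorem Cpp4.union {R S : Set (FreeGroup X)} (hR : Cpp4 R) (hS : Cpp4 S)
    (hRS : Disjoint (generatorsOf R) (generatorsOf S)) : Cpp4 (R ∪ S) := by
  have few_pieces : ∀ {R S : Set (FreeGroup X)}, Cpp4 R →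
      Disjoint (generatorsOf R) (generatorsOf S) → ∀ r ∈ R, ¬ ∃ ps : List (Word X),
        ps.length < 4 ∧ (∀ p ∈ ps, IsPiece (R ∪ S) p) ∧ r.toWord = ps.flatten := by
    rintro R S hR hRS r hr ⟨ps, hlen, hps, hflat⟩
    refine hR.2 r hr ⟨ps, hlen, fun p hp => (hps p hp).of_union hRS hr fun l hl => ?_, hflat⟩
    exact hflat ▸ List.mem_flatten.2 ⟨p, hp, hl⟩
  refine ⟨?_, ?_⟩
  · rintro r (hr | hr)
    exacts [hR.1 r hr, hS.1 r hr]
  · rintro r (hr | hr)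
    · exact few_pieces hR hRS r hr
    · rw [Set.union_comm]
      exact few_pieces hS hRS.symm r hr

theorem NoCancel.map (hf : Injective f) {r s : FreeGroup X} (h : NoCancel r s) :
    NoCancel (FreeGroup.map f r) (FreeGroup.map f s) := by
  unfold NoCancel at *
  simp only [← _root_.map_mul, FreeGroup.toWord_map_of_injective hf, h, List.map_append]

theorem noCancel_of_disjoint {R S : Set (FreeGroup X)}
    (hRS : Disjoint (generatorsOf R) (generatorsOf S)) {r s : FreeGroup X} (hr : r ∈ R)
    (hs : s ∈ S) : NoCancel r s ∧ NoCancel s r := by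
  have hne : ∀ a ∈ r.toWord, ∀ b ∈ s.toWord, a.1 ≠ b.1 := fun a ha b hb hab =>
    Set.disjoint_left.1 hRS ⟨r, hr, a.2, ha⟩ ⟨s, hs, b.2, hab ▸ hb⟩
  exact ⟨FreeGroup.toWord_mul_of_forall_ne hne,
    FreeGroup.toWord_mul_of_forall_ne fun b hb a ha hba => hne a ha b hb hba.symm⟩

theorem T4.image_map (hf : Injective f) {R : Set (FreeGroup X)} (h : T4 R) :
    T4 (FreeGroup.map f '' R) := by
  rintro _ ⟨a₁, h₁, rfl⟩ _ ⟨a₂, h₂, rfl⟩ _ ⟨a₃, h₃, rfl⟩ h₁₂ h₂₃ h₁₃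
  have ne_inv : ∀ {a b : FreeGroup X}, FreeGroup.map f a ≠ (FreeGroup.map f b)⁻¹ → a ≠ b⁻¹ :=
    fun hne hab => hne (by rw [hab, map_inv])
  rcases h a₁ h₁ a₂ h₂ a₃ h₃ (ne_inv h₁₂) (ne_inv h₂₃) (ne_inv h₁₃) with h | h | h
  exacts [Or.inl (h.map hf), Or.inr (Or.inl (h.map hf)), Or.inr (Or.inr (h.map hf))]

theorem T4.union {R S : Set (FreeGroup X)} (hR : T4 R) (hS : T4 S)
    (hRS : Disjoint (generatorsOf R) (generatorsOf S)) : T4 (R ∪ S) := by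
  have mixed : ∀ {r s}, r ∈ R → s ∈ S → NoCancel r s ∧ NoCancel s r :=
    noCancel_of_disjoint hRS
  rintro r₁ (h₁ | h₁) r₂ (h₂ | h₂) r₃ (h₃ | h₃) h₁₂ h₂₃ h₁₃
  · exact hR r₁ h₁ r₂ h₂ r₃ h₃ h₁₂ h₂₃ h₁₃
  · exact Or.inr (Or.inl (mixed h₂ h₃).1)
  · exact Or.inl (mixed h₁ h₂).1
  · exact Or.inl (mixed h₁ h₂).1
  · exact Or.inl (mixed h₂ h₁).2
  · exact Or.inl (mixed h₂ h₁).2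
  · exact Or.inr (Or.inl (mixed h₃ h₂).2)
  · exact hS r₁ h₁ r₂ h₂ r₃ h₃ h₁₂ h₂₃ h₁₃

end Relators

/-- The union of the images, in the free group on `X ⊕ Y`, of two symmetrized C''(4)–T(4)
sets of relators over disjoint alphabets `X` and `Y` is again a symmetrized C''(4)–T(4)
set of relators. -/
theorem freeProduct_Cpp4_T4
    {X Y : Type*} [DecidableEq X] [DecidableEq Y]
    (R₁ : Set (FreeGroup X)) (R₂ : Set (FreeGroup Y))
    (h₁sym : Symmetrized R₁) (h₁C : Cpp4 R₁) (h₁T : T4 R₁)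
    (h₂sym : Symmetrized R₂) (h₂C : Cpp4 R₂) (h₂T : T4 R₂) :
    Symmetrized ((FreeGroup.map Sum.inl '' R₁ ∪ FreeGroup.map Sum.inr '' R₂ :
        Set (FreeGroup (X ⊕ Y)))) ∧
    Cpp4 ((FreeGroup.map Sum.inl '' R₁ ∪ FreeGroup.map Sum.inr '' R₂ :
        Set (FreeGroup (X ⊕ Y)))) ∧
    T4 ((FreeGroup.map Sum.inl '' R₁ ∪ FreeGroup.map Sum.inr '' R₂ :
        Set (FreeGroup (X ⊕ Y)))) := by
  have hdisj : Disjoint (generatorsOf (FreeGroup.map Sum.inl '' R₁ : Set (FreeGroup (X ⊕ Y))))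
      (generatorsOf (FreeGroup.map Sum.inr '' R₂)) :=
    Set.isCompl_range_inl_range_inr.disjoint.mono
      (generatorsOf_image_map_subset _ _) (generatorsOf_image_map_subset _ _)
  exact ⟨(h₁sym.image_map Sum.inl_injective).union (h₂sym.image_map Sum.inr_injective),
    (h₁C.image_map Sum.inl_injective).union (h₂C.image_map Sum.inr_injective) hdisj,
    (h₁T.image_map Sum.inl_injective).union (h₂T.image_map Sum.inr_injective) hdisj⟩
end
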